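/- arXiv:2505.13374 — 6 statements merged into one kernel-verified Lean document; each statement's English description precedes it below -/
import Mathlib

section
/- Tadmor's condition puts the semi-discrete entropy balance in conservation form: let (V_j)_{j∈ℤ} be a sequence in ℝ³, (ψ_j)_{j∈ℤ} a sequence in ℝ, and (F_{j+1/2})_{j∈ℤ} a sequence in ℝ³ satisfying (V_{j+1} − V_j) · F_{j+1/2} = ψ_{j+1} − ψ_j for all j. Define the numerical entropy flux ζ_{j+1/2} = ½(V_{j+1} + V_j) · F_{j+1/2} − ½(ψ_{j+1} + ψ_j). Then for every j, V_j · (F_{j+1/2} − F_{j−1/2}) = ζ_{j+1/2} − ζ_{j−1/2}. -/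
/-- Tadmor's condition puts the semi-discrete entropy balance in conservation form.
Here `F j` denotes the numerical flux `F_{j+1/2}` at the interface between cells `j` and
`j+1`, and `ζ j` denotes the numerical entropy flux `ζ_{j+1/2}`. -/
theorem tadmor_conservation_form
    (V F : ℤ → Fin 3 → ℝ) (ψ : ℤ → ℝ)
    (htadmor : ∀ j, ∑ i, (V (j + 1) i - V j i) * F j i = ψ (j + 1) - ψ j)
    (ζ : ℤ → ℝ)
    (hζ : ∀ j, ζ j = (1 / 2) * ∑ i, (V (j + 1) i + V j i) * F j i
      - (1 / 2) * (ψ (j + 1) + ψ j)) :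
    ∀ j, ∑ i, V j i * (F j i - F (j - 1) i) = ζ j - ζ (j - 1) := by
  intro j
  have h1 := htadmor j
  have h2 := htadmor (j - 1)
  have e : j - 1 + 1 = j := by ring
  rw [e] at h2
  rw [hζ j, hζ (j - 1), e]
  simp only [sub_mul, add_mul, mul_sub, Finset.sum_sub_distrib, Finset.sum_add_distrib] at *
  linarith
end

section
/- The ECKEP flux is simultaneously entropy conservative and kinetic energy preserving: let ΔV = (ΔV₁, ΔV₂, ΔV₃) ∈ ℝ³ with ΔV₃ ≠ 0, let F̄¹, F̄³, ū, p̄, Δψ ∈ ℝ be arbitrary, and set α₃/2 = (F̄¹ΔV₁ + (F̄¹ū + p̄)ΔV₂ + F̄³ΔV₃ − Δψ)/(ΔV₃)². Then the flux F = (F̄¹, F̄¹ū + p̄, F̄³ − (α₃/2)·ΔV₃) satisfies Tadmor's condition ΔV · F = Δψ, and its momentum component satisfies Jameson's kinetic energy preservation condition F² = ū·F¹ + p̄. -/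
/-- The ECKEP flux is simultaneously entropy conservative and kinetic energy preserving:
with `α₃/2 = (F̄¹ΔV₁ + (F̄¹ū + p̄)ΔV₂ + F̄³ΔV₃ − Δψ)/(ΔV₃)²` (for `ΔV₃ ≠ 0`), the flux
`F = (F̄¹, F̄¹ū + p̄, F̄³ − (α₃/2)·ΔV₃)` satisfies Tadmor's condition `ΔV · F = Δψ` and
Jameson's kinetic energy preservation condition `F² = ū·F¹ + p̄`. -/
theorem ECKEP_entropy_conservative_and_KEP
    (ΔV₁ ΔV₂ ΔV₃ Fbar₁ Fbar₃ ubar pbar Δψ : ℝ) (hΔV₃ : ΔV₃ ≠ 0)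
    (α₃half : ℝ)
    (hα : α₃half = (Fbar₁ * ΔV₁ + (Fbar₁ * ubar + pbar) * ΔV₂ + Fbar₃ * ΔV₃ - Δψ)
      / ΔV₃ ^ 2)
    (F₁ F₂ F₃ : ℝ)
    (hF₁ : F₁ = Fbar₁) (hF₂ : F₂ = Fbar₁ * ubar + pbar)
    (hF₃ : F₃ = Fbar₃ - α₃half * ΔV₃) :
    ΔV₁ * F₁ + ΔV₂ * F₂ + ΔV₃ * F₃ = Δψ ∧ F₂ = ubar * F₁ + pbar := by
  subst hα hF₁ hF₂ hF₃
  refine ⟨?_, by ring⟩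
  field_simp
  ring
end

section
/- Jameson's momentum flux yields a local kinetic energy preservation identity: let (ρ_j)_{j∈ℤ}, (u_j)_{j∈ℤ} be real sequences and let (m̂_{j+1/2})_{j∈ℤ} and (p̂_{j+1/2})_{j∈ℤ} be arbitrary interface mass and pressure fluxes. Define the momentum flux F²_{j+1/2} = m̂_{j+1/2}·(u_{j+1} + u_j)/2 + p̂_{j+1/2} and the kinetic energy flux k_{j+1/2} = m̂_{j+1/2}·(u_{j+1}·u_j)/2. Then for every j, (u_j²/2)·(m̂_{j+1/2} − m̂_{j−1/2}) − u_j·(F²_{j+1/2} − F²_{j−1/2}) = −(k_{j+1/2} − k_{j−1/2}) − u_j·(p̂_{j+1/2} − p̂_{j−1/2}). -/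
/-- Jameson's momentum flux yields a local kinetic energy preservation identity.
Here `mhat j`, `phat j`, `F₂ j`, `k j` denote the interface quantities at `j+1/2`. -/
theorem jameson_local_kinetic_energy_preservation
    (ρ u : ℤ → ℝ) (mhat phat : ℤ → ℝ)
    (F₂ k : ℤ → ℝ)
    (hF₂ : ∀ j, F₂ j = mhat j * (u (j + 1) + u j) / 2 + phat j)
    (hk : ∀ j, k j = mhat j * (u (j + 1) * u j) / 2) :
    ∀ j, (u j ^ 2 / 2) * (mhat j - mhat (j - 1)) - u j * (F₂ j - F₂ (j - 1))
      = -(k j - k (j - 1)) - u j * (phat j - phat (j - 1)) := by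
  intro j
  have h : j - 1 + 1 = j := by ring
  rw [hF₂, hF₂, hk, hk, h]
  ring
end

section
/- Global kinetic energy preservation: let n ≥ 1, let ρ_j, u_j, p_j (j = 1,…,n) be real sequences, let m̂_{j+1/2} and p̂_{j+1/2} (j = 1,…,n−1) be arbitrary interior interface mass and pressure fluxes, and define interior momentum fluxes F²_{j+1/2} = m̂_{j+1/2}(u_{j+1}+u_j)/2 + p̂_{j+1/2}. Take boundary fluxes m̂_{1/2} = ρ₁u₁, F²_{1/2} = ρ₁u₁² + p₁, m̂_{n+1/2} = ρ_n u_n, F²_{n+1/2} = ρ_n u_n² + p_n. Then ∑_{j=1}^{n} [ (u_j²/2)(m̂_{j+1/2} − m̂_{j−1/2}) − u_j(F²_{j+1/2} − F²_{j−1/2}) ] = − u_n(ρ_n u_n²/2 + p_n) + u₁(ρ₁u₁²/2 + p₁) + ∑_{j=1}^{n−1} p̂_{j+1/2}(u_{j+1} − u_j). -/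
/-- Global kinetic energy preservation: with Jameson's momentum flux in the interior and
physical boundary fluxes, the total discrete kinetic energy production reduces to boundary
terms plus the pressure work sum. Here `mhat j`, `phat j`, `F₂ j` denote interface quantities
at `j+1/2` (so `mhat 0 = mhat_{1/2}` and `mhat n = mhat_{n+1/2}`). -/
theorem global_kinetic_energy_preservation
    (n : ℕ) (hn : 1 ≤ n)
    (ρ u p : ℕ → ℝ) (mhat phat : ℕ → ℝ) (F₂ : ℕ → ℝ)
    (hF₂int : ∀ j, 1 ≤ j → j ≤ n - 1 →
      F₂ j = mhat j * (u (j + 1) + u j) / 2 + phat j)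
    (hm₀ : mhat 0 = ρ 1 * u 1) (hF₂₀ : F₂ 0 = ρ 1 * u 1 ^ 2 + p 1)
    (hmₙ : mhat n = ρ n * u n) (hF₂ₙ : F₂ n = ρ n * u n ^ 2 + p n) :
    ∑ j ∈ Finset.Icc 1 n,
        ((u j ^ 2 / 2) * (mhat j - mhat (j - 1)) - u j * (F₂ j - F₂ (j - 1)))
      = -(u n * (ρ n * u n ^ 2 / 2 + p n)) + u 1 * (ρ 1 * u 1 ^ 2 / 2 + p 1)
        + ∑ j ∈ Finset.Icc 1 (n - 1), phat j * (u (j + 1) - u j) := by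
  set H : ℕ → ℝ := fun j => u j ^ 2 / 2 * mhat j - u j * F₂ j with hH
  set K : ℕ → ℝ := fun j => u (j + 1) ^ 2 / 2 * mhat j - u (j + 1) * F₂ j with hK
  have step1 : ∑ j ∈ Finset.Icc 1 n,
      ((u j ^ 2 / 2) * (mhat j - mhat (j - 1)) - u j * (F₂ j - F₂ (j - 1)))
      = ∑ j ∈ Finset.Icc 1 n, (H j - K (j - 1)) := by
    apply Finset.sum_congr rfl
    intro j hj
    have hj1 : 1 ≤ j := (Finset.mem_Icc.mp hj).1
    have hjj : j - 1 + 1 = j := Nat.succ_pred_eq_of_pos hj1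
    simp only [hH, hK, hjj]
    ring
  rw [step1, Finset.sum_sub_distrib]
  have hA : ∑ j ∈ Finset.Icc 1 n, H j = ∑ i ∈ Finset.range n, H (1 + i) := by
    rw [← Finset.Ico_add_one_right_eq_Icc, Finset.sum_Ico_eq_sum_range]
    congr 1
  have hB : ∑ j ∈ Finset.Icc 1 n, K (j - 1) = ∑ i ∈ Finset.range n, K i := by
    rw [← Finset.Ico_add_one_right_eq_Icc, Finset.sum_Ico_eq_sum_range]
    have h : n + 1 - 1 = n := by omega
    rw [h]
    apply Finset.sum_congr rfl
    intro i _
    congr 1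
    omega
  have hC : ∑ j ∈ Finset.Icc 1 (n - 1), phat j * (u (j + 1) - u j)
      = ∑ i ∈ Finset.range (n - 1), phat (1 + i) * (u (1 + i + 1) - u (1 + i)) := by
    rw [← Finset.Ico_add_one_right_eq_Icc, Finset.sum_Ico_eq_sum_range]
    congr 1
  rw [hA, hB, hC]
  obtain ⟨m, rfl⟩ : ∃ m, n = m + 1 := ⟨n - 1, by omega⟩
  rw [Finset.sum_range_succ, Finset.sum_range_succ']
  have hm : m + 1 - 1 = m := by omega
  rw [hm]
  have hsum : ∀ i ∈ Finset.range m,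
      H (1 + i) - K (i + 1) = phat (1 + i) * (u (1 + i + 1) - u (1 + i)) := by
    intro i hi
    have hi' : i < m := Finset.mem_range.mp hi
    have h1i : 1 + i = i + 1 := by omega
    have hF := hF₂int (i + 1) (by omega) (by omega)
    simp only [hH, hK, h1i, hF]
    ring
  have key : ∑ i ∈ Finset.range m, H (1 + i) - ∑ i ∈ Finset.range m, K (i + 1)
      = ∑ i ∈ Finset.range m, phat (1 + i) * (u (1 + i + 1) - u (1 + i)) := by
    rw [← Finset.sum_sub_distrib]
    exact Finset.sum_congr rfl hsum
  have hHn : H (1 + m) = -(u (m + 1) * (ρ (m + 1) * u (m + 1) ^ 2 / 2 + p (m + 1))) := by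
    have : 1 + m = m + 1 := by omega
    simp only [hH, this, hmₙ, hF₂ₙ]
    ring
  have hK0 : K 0 = -(u 1 * (ρ 1 * u 1 ^ 2 / 2 + p 1)) := by
    simp only [hK, hm₀, hF₂₀]
    norm_num
    ring
  rw [hHn, hK0]
  linarith [key]
end

section
/- The EC1 flux captures a steady contact discontinuity exactly: fix γ > 1, p > 0, and ρ_L, ρ_R > 0 with ρ_L ≠ ρ_R, and consider the left and right states (ρ_L, 0, p) and (ρ_R, 0, p). With V, F, ψ the corresponding entropy variables, physical fluxes and entropy flux potentials of the two states, ΔX = X_R − X_L, F̄ = (F_L + F_R)/2, and α₁/2 = (F̄ · ΔV − Δψ)/(ΔV · ΔV), the EC1 flux F^c = F̄ − (α₁/2)·ΔV is well defined (ΔV ≠ 0) and equals (0, p, 0). -/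
/-- Entropy variables of a 1-D Euler state `(ρ, u, p)` for ratio of specific heats `γ`. -/
noncomputable def eulerV (γ ρ u p : ℝ) : Fin 3 → ℝ :=
  ![(γ - Real.log (p / ρ ^ γ)) / (γ - 1) - ρ * u ^ 2 / (2 * p), ρ * u / p, -ρ / p]

/-- Physical flux of a 1-D Euler state `(ρ, u, p)` for ratio of specific heats `γ`. -/
noncomputable def eulerFlux (γ ρ u p : ℝ) : Fin 3 → ℝ :=
  ![ρ * u, ρ * u ^ 2 + p, u * (γ * p / (γ - 1) + ρ * u ^ 2 / 2)]

/-- Entropy flux potential `ψ = ρu` of a 1-D Euler state. -/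
def eulerPsi (ρ u : ℝ) : ℝ := ρ * u

/-- The EC1 flux captures a steady contact discontinuity exactly: for left and right
states `(ρ_L, 0, p)` and `(ρ_R, 0, p)` with `ρ_L ≠ ρ_R`, the jump of the entropy
variables is nonzero (so the flux is well defined) and the EC1 flux equals `(0, p, 0)`. -/
theorem EC1_steady_contact
    (γ p ρL ρR : ℝ) (hγ : 1 < γ) (hp : 0 < p)
    (hρL : 0 < ρL) (hρR : 0 < ρR) (hne : ρL ≠ ρR)
    (ΔV Fbar : Fin 3 → ℝ) (Δψ α₁half : ℝ) (Fc : Fin 3 → ℝ)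
    (hΔV : ΔV = fun i => eulerV γ ρR 0 p i - eulerV γ ρL 0 p i)
    (hFbar : Fbar = fun i => (eulerFlux γ ρL 0 p i + eulerFlux γ ρR 0 p i) / 2)
    (hΔψ : Δψ = eulerPsi ρR 0 - eulerPsi ρL 0)
    (hα : α₁half = ((∑ i, Fbar i * ΔV i) - Δψ) / (∑ i, ΔV i * ΔV i))
    (hFc : Fc = fun i => Fbar i - α₁half * ΔV i) :
    ΔV ≠ 0 ∧ Fc = ![0, p, 0] := by
  have hΔV1 : ΔV 1 = 0 := by
    simp [hΔV, eulerV]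
  have hΔV2 : ΔV 2 = -ρR / p - -ρL / p := by
    simp [hΔV, eulerV]
  have hΔV2ne : ΔV 2 ≠ 0 := by
    rw [hΔV2]
    intro h
    apply hne
    field_simp at h
    nlinarith [mul_pos hp hρL, mul_pos hp hρR]
  have hF0 : Fbar 0 = 0 := by simp [hFbar, eulerFlux]
  have hF1 : Fbar 1 = p := by
    simp [hFbar, eulerFlux]
  have hF2 : Fbar 2 = 0 := by simp [hFbar, eulerFlux]
  have hα0 : α₁half = 0 := by
    rw [hα, hΔψ]
    simp [Fin.sum_univ_three, hΔV1, hF0, hF2, eulerPsi]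
  refine ⟨fun h => hΔV2ne (by rw [h]; rfl), ?_⟩
  rw [hFc]
  funext i
  fin_cases i <;> simp [hα0, hF0, hF1, hF2]
end

section
/- The entropy stable scheme based on the ECKEP flux plus scalar diffusion is kinetic energy stable: let (ρ_j), (u_j) be real sequences, (m̂_{j+1/2}), (p̂_{j+1/2}), (α_{j+1/2}) arbitrary real interface sequences, and define the numerical mass flux F¹_{j+1/2} = m̂_{j+1/2} − (α_{j+1/2}/2)(ρ_{j+1} − ρ_j), the numerical momentum flux F²_{j+1/2} = m̂_{j+1/2}(u_{j+1}+u_j)/2 + p̂_{j+1/2} − (α_{j+1/2}/2)(ρ_{j+1}u_{j+1} − ρ_j u_j), and the kinetic energy flux k_{j+1/2} = m̂_{j+1/2}(u_{j+1}u_j)/2 − (α_{j+1/2}/4)(ρ_{j+1}u_{j+1}² − ρ_j u_j²). Then for every j, (u_j²/2)(F¹_{j+1/2} − F¹_{j−1/2}) − u_j(F²_{j+1/2} − F²_{j−1/2}) = −(k_{j+1/2} − k_{j−1/2}) − u_j(p̂_{j+1/2} − p̂_{j−1/2}) − ¼[α_{j+1/2}·ρ_{j+1}(u_{j+1} − u_j)²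 + α_{j−1/2}·ρ_{j−1}(u_j − u_{j−1})²]; in particular, if all α_{j+1/2} ≥ 0 and all ρ_j ≥ 0, the last bracketed term is nonnegative, so the discrete kinetic energy production beyond the conservative flux and pressure work terms is nonpositive. -/
/-- The entropy stable scheme based on the ECKEP flux plus scalar diffusion is kinetic
energy stable: the discrete kinetic energy production satisfies an identity with a
quadratic dissipation term, and if all `α ≥ 0` and all `ρ ≥ 0` this production is bounded
by the conservative flux difference plus the pressure work term.
Here index `j` of an interface sequence denotes the interface `j+1/2`. -/
theorem ECKEP_scalar_diffusion_kinetic_energy_stable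
    (ρ u : ℤ → ℝ) (mhat phat α : ℤ → ℝ)
    (F₁ F₂ k : ℤ → ℝ)
    (hF₁ : ∀ j, F₁ j = mhat j - α j / 2 * (ρ (j + 1) - ρ j))
    (hF₂ : ∀ j, F₂ j = mhat j * (u (j + 1) + u j) / 2 + phat j
      - α j / 2 * (ρ (j + 1) * u (j + 1) - ρ j * u j))
    (hk : ∀ j, k j = mhat j * (u (j + 1) * u j) / 2
      - α j / 4 * (ρ (j + 1) * u (j + 1) ^ 2 - ρ j * u j ^ 2)) :
    (∀ j, (u j ^ 2 / 2) * (F₁ j - F₁ (j - 1)) - u j * (F₂ j - F₂ (j - 1))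
        = -(k j - k (j - 1)) - u j * (phat j - phat (j - 1))
          - (1 / 4) * (α j * ρ (j + 1) * (u (j + 1) - u j) ^ 2
            + α (j - 1) * ρ (j - 1) * (u j - u (j - 1)) ^ 2)) ∧
    ((∀ j, 0 ≤ α j) → (∀ j, 0 ≤ ρ j) →
      ∀ j, (u j ^ 2 / 2) * (F₁ j - F₁ (j - 1)) - u j * (F₂ j - F₂ (j - 1))
        ≤ -(k j - k (j - 1)) - u j * (phat j - phat (j - 1))) := by
  have key : ∀ j, (u j ^ 2 / 2) * (F₁ j - F₁ (j - 1)) - u j * (F₂ j - F₂ (j - 1))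
        = -(k j - k (j - 1)) - u j * (phat j - phat (j - 1))
          - (1 / 4) * (α j * ρ (j + 1) * (u (j + 1) - u j) ^ 2
            + α (j - 1) * ρ (j - 1) * (u j - u (j - 1)) ^ 2) := by
    intro j
    have e : j - 1 + 1 = j := by ring
    rw [hF₁ j, hF₁ (j-1), hF₂ j, hF₂ (j-1), hk j, hk (j-1), e]
    ring
  refine ⟨key, fun hα hρ j => ?_⟩
  rw [key j]
  have h1 : 0 ≤ (1 / 4 : ℝ) * (α j * ρ (j + 1) * (u (j + 1) - u j) ^ 2
      + α (j - 1) * ρ (j - 1) * (u j - u (j - 1)) ^ 2) := by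
    have := hα j; have := hα (j-1); have := hρ (j+1); have := hρ (j-1)
    nlinarith [sq_nonneg (u (j+1) - u j), sq_nonneg (u j - u (j-1)),
      mul_nonneg (mul_nonneg (hα j) (hρ (j+1))) (sq_nonneg (u (j+1) - u j)),
      mul_nonneg (mul_nonneg (hα (j-1)) (hρ (j-1))) (sq_nonneg (u j - u (j-1)))]
  linarith
end
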